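/- arXiv:math/0610061 — 8 statements merged into one kernel-verified Lean document; each statement's English description precedes it below -/
import Mathlib

section
/- Let u : ℝ → ℝ be a solution of the ODE u''(r) = κ·u(r)·(1 - u'(r)²)^{3/2} on an interval around 0, with |u'| < 1. Then for all r in the domain, u(r)² = u(0)² + (2/κ)·(1/√(1 - u'(r)²) - 1/√(1 - u'(0)²)), provided κ ≠ 0. -/
/-- First integral (energy identity) for u''/(1-u'²)^{3/2} = κ·u. -/
theorem stmt_0 (κ : ℝ) (hκ : κ ≠ 0) (I : Set ℝ) (hI : IsOpen I) (h0 : (0:ℝ) ∈ I)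
    (u u' u'' : ℝ → ℝ)
    (hu : ∀ r ∈ I, HasDerivAt u (u' r) r)
    (hu' : ∀ r ∈ I, HasDerivAt u' (u'' r) r)
    (hsp : ∀ r ∈ I, |u' r| < 1)
    (hode : ∀ r ∈ I, u'' r = κ * u r * Real.sqrt (1 - u' r ^ 2) ^ 3)
    (hconn : IsConnected I) :
    ∀ r ∈ I, u r ^ 2 = u 0 ^ 2 +
      (2 / κ) * (1 / Real.sqrt (1 - u' r ^ 2) - 1 / Real.sqrt (1 - u' 0 ^ 2)) := by
  set g : ℝ → ℝ := fun r => κ / 2 * u r ^ 2 - (Real.sqrt (1 - u' r ^ 2))⁻¹ with hg_def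
  have hwpos : ∀ r ∈ I, 0 < 1 - u' r ^ 2 := by
    intro r hr
    have := hsp r hr
    nlinarith [abs_nonneg (u' r), sq_abs (u' r), this]
  have hspos : ∀ r ∈ I, 0 < Real.sqrt (1 - u' r ^ 2) := fun r hr =>
    Real.sqrt_pos.mpr (hwpos r hr)
  have hg : ∀ r ∈ I, HasDerivAt g 0 r := by
    intro r hr
    have hw : HasDerivAt (fun r => 1 - u' r ^ 2) (-(2 * u' r ^ 1 * u'' r)) r :=
      ((hu' r hr).pow 2).const_sub 1
    have hs : HasDerivAt (fun r => Real.sqrt (1 - u' r ^ 2))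
        (-(2 * u' r ^ 1 * u'' r) / (2 * Real.sqrt (1 - u' r ^ 2))) r :=
      hw.sqrt (ne_of_gt (hwpos r hr))
    have hinv : HasDerivAt (fun r => (Real.sqrt (1 - u' r ^ 2))⁻¹)
        (-(-(2 * u' r ^ 1 * u'' r) / (2 * Real.sqrt (1 - u' r ^ 2))) /
          (Real.sqrt (1 - u' r ^ 2)) ^ 2) r :=
      hs.inv (ne_of_gt (hspos r hr))
    have hmain : HasDerivAt g (κ / 2 * (2 * u r ^ 1 * u' r) -
        -(-(2 * u' r ^ 1 * u'' r) / (2 * Real.sqrt (1 - u' r ^ 2))) /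
          (Real.sqrt (1 - u' r ^ 2)) ^ 2) r :=
      (((hu r hr).pow 2).const_mul (κ / 2)).sub hinv
    convert hmain using 1
    have hode' := hode r hr
    have hs0 := hspos r hr
    field_simp
    rw [hode']
    ring
  have hconv : Convex ℝ I := hconn.isPreconnected.ordConnected.convex
  have hdiff : DifferentiableOn ℝ g I := fun r hr =>
    ((hg r hr).differentiableAt.differentiableWithinAt)
  have hconst : ∀ r ∈ I, g r = g 0 := by
    intro r hr
    apply hconv.is_const_of_fderivWithin_eq_zero hdiff _ hr h0
    intro z hz
    rw [fderivWithin_of_isOpen hI hz, (hg z hz).hasFDerivAt.fderiv]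
    ext
    simp
  intro r hr
  have h := hconst r hr
  simp only [hg_def] at h
  have hs0 := hspos 0 h0
  have hsr := hspos r hr
  field_simp at h ⊢
  nlinarith [h, hs0, hsr, mul_pos hs0 hsr]
end

section
/- Let κ > 0, u₀ > 0, and let (u,v) solve u' = v/√(1+v²), v' = κu on ℝ with u(0) = u₀, v(0) = 0. Then u is strictly convex on ℝ (u''(r) > 0 for all r), u(r) → ∞ as r → ∞, u'(r) → 1 as r → ∞, and u''(r) → 0 as r → ∞. -/
/-!
Along the solution the quantity `κ u² / 2 - √(1 + v²)` is conserved, so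
`u² = u₀² + 2 (√(1 + v²) - 1) / κ ≥ u₀²`; by continuity `u ≥ u₀ > 0`, hence `v' = κ u ≥ κ u₀`
and `u'' = κ u / (1 + v²)^{3/2} > 0`. Thus `v → ∞`, which gives `u' = v / √(1 + v²) → 1`, and,
since `u'` increases from `u'(0) = 0`, `u` grows at least linearly. Finally the first integral gives
`κ u² ≤ (κ u₀² + 2) √(1 + v²)`, so `u'' ≤ (κ u₀² + 2) / u → 0`.
-/

open Filter Topology

theorem hasDerivAt_sqrt_one_add_sq {f : ℝ → ℝ} {f' x : ℝ} (hf : HasDerivAt f f' x) :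
    HasDerivAt (fun y => √(1 + f y ^ 2)) (f x * f' / √(1 + f x ^ 2)) x := by
  have h : HasDerivAt (fun y => 1 + f y ^ 2) (2 * f x ^ 1 * f') x := (hf.pow 2).const_add 1
  convert h.sqrt (by positivity) using 1
  ring

theorem hasDerivAt_div_sqrt_one_add_sq {f : ℝ → ℝ} {f' x : ℝ} (hf : HasDerivAt f f' x) :
    HasDerivAt (fun y => f y / √(1 + f y ^ 2)) (f' / √(1 + f x ^ 2) ^ 3) x := by
  have hs : √(1 + f x ^ 2) ^ 2 = 1 + f x ^ 2 := Real.sq_sqrt (by positivity)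
  have hpos : 0 < √(1 + f x ^ 2) := by positivity
  refine (hf.div (hasDerivAt_sqrt_one_add_sq hf) hpos.ne').congr_deriv ?_
  field_simp
  linear_combination f' * hs

theorem tendsto_div_sqrt_one_add_sq_atTop :
    Tendsto (fun x : ℝ => x / √(1 + x ^ 2)) atTop (𝓝 1) := by
  have key : ∀ x : ℝ, 0 < x → (√(1 + x⁻¹ ^ 2))⁻¹ = x / √(1 + x ^ 2) := by
    intro x hx
    have : √(1 + x ^ 2) = x * √(1 + x⁻¹ ^ 2) := by
      rw [Real.sqrt_eq_iff_mul_self_eq (by positivity) (by positivity),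
        mul_mul_mul_comm, Real.mul_self_sqrt (by positivity)]
      field_simp
      ring
    rw [this]
    field_simp
  have h : Tendsto (fun x : ℝ => (√(1 + x⁻¹ ^ 2))⁻¹) atTop (𝓝 (√(1 + 0 ^ 2))⁻¹) :=
    (((continuous_const.add (continuous_pow 2)).sqrt.tendsto 0).inv₀ (by simp)).comp
      tendsto_inv_atTop_zero
  rw [show (√(1 + 0 ^ 2))⁻¹ = (1 : ℝ) by simp] at h
  exact h.congr' (eventually_atTop.2 ⟨1, fun x hx => key x (by linarith)⟩)

theorem pos_of_continuous_of_ne_zero {f : ℝ → ℝ} (hf : Continuous f) (hne : ∀ x, f x ≠ 0)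
    {a : ℝ} (ha : 0 < f a) (x : ℝ) : 0 < f x := by
  by_contra! hx
  obtain ⟨c, -, hc⟩ :=
    intermediate_value_uIcc hf.continuousOn (Set.mem_uIcc.2 (Or.inl ⟨hx, ha.le⟩))
  exact hne c hc

theorem tendsto_atTop_of_hasDerivAt_of_le {f f' : ℝ → ℝ} {a c : ℝ} (hc : 0 < c)
    (hf : ∀ x, HasDerivAt f (f' x) x) (hf' : ∀ x, a ≤ x → c ≤ f' x) :
    Tendsto f atTop atTop := by
  have hlin : ∀ x, a ≤ x → f a + c * (x - a) ≤ f x := by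
    intro x hx
    have := (convex_Ici a).mul_sub_le_image_sub_of_le_deriv
      (fun y _ => (hf y).continuousAt.continuousWithinAt)
      (fun y _ => (hf y).differentiableAt.differentiableWithinAt)
      (fun y hy => by
        rw [interior_Ici] at hy
        exact (hf y).deriv ▸ hf' y hy.le)
      a (Set.mem_Ici.2 le_rfl) x hx hx
    linarith
  refine tendsto_atTop_mono' atTop (eventually_atTop.2 ⟨a, hlin⟩) ?_
  exact tendsto_atTop_add_const_left _ _ <|
    (tendsto_atTop_add_const_right _ _ tendsto_id).const_mul_atTop hc

namespace SessileDrop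

variable {κ : ℝ} {u v : ℝ → ℝ}

theorem first_integral (hu : ∀ r, HasDerivAt u (v r / √(1 + v r ^ 2)) r)
    (hv : ∀ r, HasDerivAt v (κ * u r) r) (hv0 : v 0 = 0) (r : ℝ) :
    √(1 + v r ^ 2) = κ * (u r ^ 2 - u 0 ^ 2) / 2 + 1 := by
  have hE : ∀ x, HasDerivAt (fun r => κ * u r ^ 2 / 2 - √(1 + v r ^ 2)) 0 x := by
    intro x
    have h : HasDerivAt (fun r => κ * u r ^ 2 / 2)
        (κ * (2 * u x ^ 1 * (v x / √(1 + v x ^ 2))) / 2) x :=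
      (((hu x).pow 2).const_mul κ).div_const 2
    refine (h.sub (hasDerivAt_sqrt_one_add_sq (hv x))).congr_deriv ?_
    ring
  have hconst := is_const_of_deriv_eq_zero (fun y => (hE y).differentiableAt)
    (fun y => (hE y).deriv) r 0
  have h0 : √(1 + v 0 ^ 2) = 1 := by simp [hv0]
  linarith

theorem sq_apply_zero_le (hu : ∀ r, HasDerivAt u (v r / √(1 + v r ^ 2)) r)
    (hv : ∀ r, HasDerivAt v (κ * u r) r) (hv0 : v 0 = 0) (hκ : 0 < κ) (r : ℝ) :
    u 0 ^ 2 ≤ u r ^ 2 := by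
  have h1 : 1 ≤ √(1 + v r ^ 2) := Real.one_le_sqrt.2 (by nlinarith)
  rw [first_integral hu hv hv0] at h1
  nlinarith

theorem apply_zero_le (hu : ∀ r, HasDerivAt u (v r / √(1 + v r ^ 2)) r)
    (hv : ∀ r, HasDerivAt v (κ * u r) r) (hv0 : v 0 = 0) (hκ : 0 < κ) (hu0 : 0 < u 0)
    (r : ℝ) : u 0 ≤ u r := by
  have hne : ∀ x, u x ≠ 0 := fun x hx =>
    (pow_pos hu0 2).not_ge (by simpa [hx] using sq_apply_zero_le hu hv hv0 hκ x)
  have hpos := pos_of_continuous_of_ne_zero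
    (continuous_iff_continuousAt.2 fun x => (hu x).continuousAt) hne hu0 r
  exact (pow_le_pow_iff_left₀ hu0.le hpos.le two_ne_zero).1 (sq_apply_zero_le hu hv hv0 hκ r)

theorem mul_div_sqrt_pow_three_le (hu : ∀ r, HasDerivAt u (v r / √(1 + v r ^ 2)) r)
    (hv : ∀ r, HasDerivAt v (κ * u r) r) (hv0 : v 0 = 0) (hκ : 0 < κ) {r : ℝ}
    (hr : 0 < u r) : κ * u r / √(1 + v r ^ 2) ^ 3 ≤ (κ * u 0 ^ 2 + 2) / u r := by
  set s := √(1 + v r ^ 2)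
  have hs1 : 1 ≤ s := Real.one_le_sqrt.2 (by nlinarith)
  have hs : s = κ * (u r ^ 2 - u 0 ^ 2) / 2 + 1 := first_integral hu hv hv0 r
  calc κ * u r / s ^ 3 ≤ κ * u r / s :=
        div_le_div_of_nonneg_left (by positivity) (by positivity) (le_self_pow₀ hs1 (by norm_num))
    _ = κ * u r ^ 2 / s / u r := by field_simp
    _ ≤ (κ * u 0 ^ 2 + 2) / u r := by
        gcongr
        rw [div_le_iff₀ (by positivity)]
        nlinarith [mul_nonneg (mul_nonneg hκ.le (sq_nonneg (u 0))) (sub_nonneg.2 hs1)]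

end SessileDrop

open SessileDrop in
/-- Sessile case: convexity and asymptotics. -/
theorem stmt_7 (κ u₀ : ℝ) (hκ : 0 < κ) (hu₀ : 0 < u₀) (u v : ℝ → ℝ)
    (hu : ∀ r : ℝ, HasDerivAt u (v r / Real.sqrt (1 + v r ^ 2)) r)
    (hv : ∀ r : ℝ, HasDerivAt v (κ * u r) r)
    (hu0 : u 0 = u₀) (hv0 : v 0 = 0) :
    (∀ r : ℝ, 0 < κ * u r / Real.sqrt (1 + v r ^ 2) ^ 3) ∧
    StrictConvexOn ℝ Set.univ u ∧
    Tendsto u atTop atTop ∧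
    Tendsto (fun r => v r / Real.sqrt (1 + v r ^ 2)) atTop (𝓝 1) ∧
    Tendsto (fun r => κ * u r / Real.sqrt (1 + v r ^ 2) ^ 3) atTop (𝓝 0) := by
  subst hu0
  have hu_ge : ∀ r, u 0 ≤ u r := apply_zero_le hu hv hv0 hκ hu₀
  have hu_pos : ∀ r, 0 < u r := fun r => hu₀.trans_le (hu_ge r)
  have hu'' : ∀ r, 0 < κ * u r / √(1 + v r ^ 2) ^ 3 := fun r => by
    have := hu_pos r
    positivity
  have hu'_mono : StrictMono (fun r => v r / √(1 + v r ^ 2)) :=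
    strictMono_of_deriv_pos fun r => (hasDerivAt_div_sqrt_one_add_sq (hv r)).deriv ▸ hu'' r
  have hu'_one : 0 < v 1 / √(1 + v 1 ^ 2) := by
    simpa [hv0] using hu'_mono zero_lt_one
  have hv_top : Tendsto v atTop atTop :=
    tendsto_atTop_of_hasDerivAt_of_le (mul_pos hκ hu₀) hv (a := 0) fun r _ =>
      mul_le_mul_of_nonneg_left (hu_ge r) hκ.le
  have hu_top : Tendsto u atTop atTop :=
    tendsto_atTop_of_hasDerivAt_of_le hu'_one hu fun r hr => hu'_mono.monotone hr
  refine ⟨hu'', ?_, hu_top, tendsto_div_sqrt_one_add_sq_atTop.comp hv_top, ?_⟩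
  · refine StrictMono.strictConvexOn_univ_of_deriv
      (continuous_iff_continuousAt.2 fun r => (hu r).continuousAt) ?_
    rwa [show deriv u = _ from funext fun r => (hu r).deriv]
  · refine tendsto_of_tendsto_of_tendsto_of_le_of_le tendsto_const_nhds ?_
      (fun r => (hu'' r).le) (fun r => mul_div_sqrt_pow_three_le hu hv hv0 hκ (hu_pos r))
    simpa [div_eq_mul_inv] using
      (tendsto_inv_atTop_zero.comp hu_top).const_mul (κ * u 0 ^ 2 + 2)
end

section
/- Fix u₀ > 0 and 0 < κ₁ < κ₂. Let uᵢ be the solutions of u' = v/√(1+v²), v' = κᵢ·u with uᵢ(0) = u₀, vᵢ(0) = 0 (i = 1,2). Then u₁(r) < u₂(r) for all r ≠ 0, and u₁'(r) < u₂'(r) for all r > 0. -/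
/-!
Write `g v = v / √(1 + v²)` for the slope `u'`, a strictly increasing function of `v`.
For `r ≥ 0` the function `h = κ₂ u₂ - κ₁ u₁ = (v₂ - v₁)'` stays positive: at a first zero `t > 0`
of `h`, `v₂ - v₁` has been increasing on `[0, t]`, hence `v₁ < v₂` and `u₁' < u₂'` on `(0, t)`,
so `u₁ t < u₂ t`, and then `h t = κ₂ (u₂ t - u₁ t) + (κ₂ - κ₁) u₁ t > 0` because `u₁ > 0`.
Integrating `h > 0` and then `g v₂ - g v₁ > 0` gives both inequalities for `r > 0`; the case `r < 0`
follows by the reflection `(u, v) ↦ (u ∘ neg, -v ∘ neg)`, which preserves the system.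
-/

open Set

lemma strictMono_div_sqrt_one_add_sq : StrictMono (fun v : ℝ => v / √(1 + v ^ 2)) := by
  refine strictMono_of_odd_strictMonoOn_nonneg (fun x => by simp [neg_div]) ?_
  intro a (ha : 0 ≤ a) b (hb : 0 ≤ b) hab
  rw [div_lt_div_iff₀ (by positivity) (by positivity)]
  refine lt_of_pow_lt_pow_left₀ 2 (by positivity) ?_
  rw [mul_pow, mul_pow, Real.sq_sqrt (by positivity), Real.sq_sqrt (by positivity)]
  nlinarith

lemma pos_of_forall_Ico_pos {f : ℝ → ℝ} {a : ℝ} (hf : ContinuousOn f (Ici a)) (ha : 0 < f a)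
    (step : ∀ t, a < t → (∀ s ∈ Ico a t, 0 < f s) → 0 < f t) (r : ℝ) (hr : a ≤ r) :
    0 < f r := by
  by_contra! hfr
  set S := Icc a r ∩ f ⁻¹' Iic 0
  have hS : IsClosed S :=
    (hf.mono Icc_subset_Ici_self).preimage_isClosed_of_isClosed isClosed_Icc isClosed_Iic
  have hSne : S.Nonempty := ⟨r, ⟨hr, le_rfl⟩, hfr⟩
  have hSbdd : BddBelow S := ⟨a, fun s hs => hs.1.1⟩
  obtain ⟨⟨hat, htr⟩, (hft : f (sInf S) ≤ 0)⟩ := hS.csInf_mem hSne hSbdd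
  have hat' : a < sInf S := lt_of_le_of_ne hat (by rintro h; rw [← h] at hft; linarith)
  refine (step _ hat' fun s ⟨has, hst⟩ => ?_).not_ge hft
  by_contra! hfs
  exact (csInf_le hSbdd ⟨⟨has, hst.le.trans htr⟩, hfs⟩).not_gt hst

lemma lt_of_hasDerivAt_pos {f f' : ℝ → ℝ} {a b : ℝ} (hab : a < b)
    (hf : ∀ x, HasDerivAt f (f' x) x) (hf' : ∀ x ∈ Ioo a b, 0 < f' x) : f a < f b := by
  refine strictMonoOn_of_hasDerivWithinAt_pos (convex_Icc a b)
    (fun x _ => (hf x).continuousAt.continuousWithinAt) (fun x _ => (hf x).hasDerivWithinAt)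
    (fun x hx => hf' x (by rwa [interior_Icc] at hx)) (left_mem_Icc.2 hab.le)
    (right_mem_Icc.2 hab.le) hab

lemma le_of_hasDerivAt_nonneg {f f' : ℝ → ℝ} {a b : ℝ} (hab : a ≤ b)
    (hf : ∀ x, HasDerivAt f (f' x) x) (hf' : ∀ x ∈ Ioo a b, 0 ≤ f' x) : f a ≤ f b := by
  refine monotoneOn_of_hasDerivWithinAt_nonneg (convex_Icc a b)
    (fun x _ => (hf x).continuousAt.continuousWithinAt) (fun x _ => (hf x).hasDerivWithinAt)
    (fun x hx => hf' x (by rwa [interior_Icc] at hx)) (left_mem_Icc.2 hab)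
    (right_mem_Icc.2 hab) hab

structure IsSessileSolution (κ : ℝ) (u v : ℝ → ℝ) : Prop where
  hasDerivAt_u : ∀ r, HasDerivAt u (v r / √(1 + v r ^ 2)) r
  hasDerivAt_v : ∀ r, HasDerivAt v (κ * u r) r

namespace IsSessileSolution

variable {κ κ₁ κ₂ : ℝ} {u v u₁ v₁ u₂ v₂ : ℝ → ℝ}

lemma continuous_u (S : IsSessileSolution κ u v) : Continuous u :=
  continuous_iff_continuousAt.2 fun r => (S.hasDerivAt_u r).continuousAt

lemma comp_neg (S : IsSessileSolution κ u v) :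
    IsSessileSolution κ (fun s => u (-s)) (fun s => -v (-s)) where
  hasDerivAt_u r :=
    ((S.hasDerivAt_u (-r)).comp r (hasDerivAt_neg r)).congr_deriv (by rw [neg_sq]; ring)
  hasDerivAt_v r :=
    ((S.hasDerivAt_v (-r)).comp r (hasDerivAt_neg r)).neg.congr_deriv (by ring)

lemma u_pos_of_nonneg (S : IsSessileSolution κ u v) (hκ : 0 ≤ κ) (hu0 : 0 < u 0) (hv0 : 0 ≤ v 0)
    (r : ℝ) (hr : 0 ≤ r) : 0 < u r := by
  refine pos_of_forall_Ico_pos S.continuous_u.continuousOn hu0 (fun t ht hpos => ?_) r hr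
  have hv_nonneg : ∀ s ∈ Icc 0 t, 0 ≤ v s := fun s ⟨hs0, hst⟩ =>
    hv0.trans <| le_of_hasDerivAt_nonneg hs0 S.hasDerivAt_v fun x hx =>
      mul_nonneg hκ (hpos x ⟨hx.1.le, hx.2.trans_le hst⟩).le
  calc 0 < u 0 := hu0
    _ ≤ u t := le_of_hasDerivAt_nonneg ht.le S.hasDerivAt_u fun x hx =>
      div_nonneg (hv_nonneg x (Ioo_subset_Icc_self hx)) (Real.sqrt_nonneg _)

lemma lt_of_capillary_lt (S₁ : IsSessileSolution κ₁ u₁ v₁) (S₂ : IsSessileSolution κ₂ u₂ v₂)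
    (hκ₁ : 0 ≤ κ₁) (hκ : κ₁ < κ₂) (hu₁0 : 0 < u₁ 0) (hv₁0 : 0 ≤ v₁ 0)
    (hu0 : u₁ 0 ≤ u₂ 0) (hv0 : v₁ 0 ≤ v₂ 0) (r : ℝ) (hr : 0 < r) :
    u₁ r < u₂ r ∧ v₁ r < v₂ r := by
  have hv_sub : ∀ x, HasDerivAt (fun s => v₂ s - v₁ s) (κ₂ * u₂ x - κ₁ * u₁ x) x :=
    fun x => (S₂.hasDerivAt_v x).sub (S₁.hasDerivAt_v x)
  have hu_sub : ∀ x, HasDerivAt (fun s => u₂ s - u₁ s)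
      (v₂ x / √(1 + v₂ x ^ 2) - v₁ x / √(1 + v₁ x ^ 2)) x :=
    fun x => (S₂.hasDerivAt_u x).sub (S₁.hasDerivAt_u x)
  have hu₁_pos := S₁.u_pos_of_nonneg hκ₁ hu₁0 hv₁0
  have hcompare : ∀ t, 0 < t → (∀ s ∈ Ioo 0 t, 0 < κ₂ * u₂ s - κ₁ * u₁ s) →
      u₁ t < u₂ t ∧ v₁ t < v₂ t := by
    intro t ht hpos
    have hv_lt : ∀ s ∈ Ioc 0 t, v₁ s < v₂ s := fun s ⟨hs0, hst⟩ => by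
      have := lt_of_hasDerivAt_pos hs0 hv_sub fun x hx => hpos x ⟨hx.1, hx.2.trans_le hst⟩
      linarith
    have := lt_of_hasDerivAt_pos ht hu_sub fun x hx =>
      sub_pos.2 (strictMono_div_sqrt_one_add_sq (hv_lt x (Ioo_subset_Ioc_self hx)))
    exact ⟨by linarith, hv_lt t ⟨ht, le_rfl⟩⟩
  have hderiv_pos : ∀ s, 0 ≤ s → 0 < κ₂ * u₂ s - κ₁ * u₁ s := by
    refine pos_of_forall_Ico_pos
      ((continuous_const.mul S₂.continuous_u).sub (continuous_const.mul S₁.continuous_u)).continuousOn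
      (by nlinarith) fun t ht hpos => ?_
    have hlt := (hcompare t ht fun s hs => hpos s (Ioo_subset_Ico_self hs)).1
    nlinarith [hu₁_pos t ht.le]
  exact hcompare r hr fun s hs => hderiv_pos s hs.1.le

end IsSessileSolution

/-- Monotonicity with respect to the capillary constant κ. -/
theorem stmt_10 (u₀ κ₁ κ₂ : ℝ) (hu₀ : 0 < u₀) (hκ₁ : 0 < κ₁) (hκ : κ₁ < κ₂)
    (u₁ v₁ u₂ v₂ : ℝ → ℝ)
    (hu₁ : ∀ r : ℝ, HasDerivAt u₁ (v₁ r / Real.sqrt (1 + v₁ r ^ 2)) r)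
    (hv₁ : ∀ r : ℝ, HasDerivAt v₁ (κ₁ * u₁ r) r)
    (hu₁0 : u₁ 0 = u₀) (hv₁0 : v₁ 0 = 0)
    (hu₂ : ∀ r : ℝ, HasDerivAt u₂ (v₂ r / Real.sqrt (1 + v₂ r ^ 2)) r)
    (hv₂ : ∀ r : ℝ, HasDerivAt v₂ (κ₂ * u₂ r) r)
    (hu₂0 : u₂ 0 = u₀) (hv₂0 : v₂ 0 = 0) :
    (∀ r : ℝ, r ≠ 0 → u₁ r < u₂ r) ∧
    (∀ r : ℝ, 0 < r →
      v₁ r / Real.sqrt (1 + v₁ r ^ 2) < v₂ r / Real.sqrt (1 + v₂ r ^ 2)) := by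
  have S₁ : IsSessileSolution κ₁ u₁ v₁ := ⟨hu₁, hv₁⟩
  have S₂ : IsSessileSolution κ₂ u₂ v₂ := ⟨hu₂, hv₂⟩
  have hforward := S₁.lt_of_capillary_lt S₂ hκ₁.le hκ (hu₁0 ▸ hu₀) hv₁0.ge
    (by rw [hu₁0, hu₂0]) (by rw [hv₁0, hv₂0])
  have hbackward := S₁.comp_neg.lt_of_capillary_lt S₂.comp_neg hκ₁.le hκ
    (by simp [hu₁0, hu₀]) (by simp [hv₁0]) (by simp [hu₁0, hu₂0]) (by simp [hv₁0, hv₂0])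
  refine ⟨fun r hr => ?_, fun r hr => strictMono_div_sqrt_one_add_sq (hforward r hr).2⟩
  rcases hr.lt_or_gt with hneg | hpos
  · simpa using (hbackward (-r) (neg_pos.2 hneg)).1
  · exact (hforward r hpos).1
end

section
/- Fix κ > 0 and a > 0. For each b ∈ ℝ there exists a unique u₀ ∈ ℝ such that the solution u(·; u₀) of u' = v/√(1+v²), v' = κu with u(0) = u₀, v(0) = 0 satisfies u(a; u₀) = b. That is, the family of solution graphs {u(·; u₀) : u₀ ∈ ℝ} foliates the plane. -/
/-!
Two solutions `(u₀, v₀)`, `(u₁, v₁)` starting at the same `v(0)` have differences `w = u₁ - u₀`,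
`z = v₁ - v₀` with `w' = g(v₁) - g(v₀)` of the sign of `z` (as `g(v) = v / √(1 + v²)` is monotone)
and `z' = κ w`. Hence `(w z)' ≥ 0`, so `w z ≥ 0` for `r ≥ 0`, hence `(w²)' = 2 w w' ≥ 0`, and `w`
can neither vanish nor shrink: `u(a; y) - u(a; x) ≥ y - x` for `x < y`. Grönwall's inequality
(`g` is `1`-Lipschitz) makes `u₀ ↦ u(a; u₀)` continuous, and a continuous map with this expansion
property is a bijection of `ℝ`.
-/

open Filter Set

noncomputable def algSigmoid (v : ℝ) : ℝ := v / Real.sqrt (1 + v ^ 2)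

lemma hasDerivAt_algSigmoid (v : ℝ) :
    HasDerivAt algSigmoid (Real.sqrt (1 + v ^ 2) ^ 3)⁻¹ v := by
  have hpos : (0 : ℝ) < 1 + v ^ 2 := by positivity
  have hsqrt : HasDerivAt (fun v : ℝ => Real.sqrt (1 + v ^ 2))
      (2 * v / (2 * Real.sqrt (1 + v ^ 2))) v :=
    (((hasDerivAt_pow 2 v).const_add 1).sqrt hpos.ne').congr_deriv (by ring)
  have hs : Real.sqrt (1 + v ^ 2) ^ 2 = 1 + v ^ 2 := Real.sq_sqrt hpos.le
  refine ((hasDerivAt_id' v).fun_div hsqrt (Real.sqrt_pos.2 hpos).ne').congr_deriv ?_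
  field_simp
  linear_combination hs

lemma differentiable_algSigmoid : Differentiable ℝ algSigmoid :=
  fun v => (hasDerivAt_algSigmoid v).differentiableAt

lemma monotone_algSigmoid : Monotone algSigmoid :=
  monotone_of_deriv_nonneg differentiable_algSigmoid fun v => by
    rw [(hasDerivAt_algSigmoid v).deriv]; positivity

lemma lipschitzWith_one_algSigmoid : LipschitzWith 1 algSigmoid := by
  refine lipschitzWith_of_nnnorm_deriv_le differentiable_algSigmoid fun v => ?_
  rw [← NNReal.coe_le_coe, coe_nnnorm, (hasDerivAt_algSigmoid v).deriv, NNReal.coe_one,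
    norm_inv, norm_pow, Real.norm_of_nonneg (Real.sqrt_nonneg _)]
  exact inv_le_one_of_one_le₀ (one_le_pow₀ (Real.one_le_sqrt.2 (by nlinarith)))

section SignArgument

variable {w z p : ℝ → ℝ} {κ : ℝ}

lemma mul_nonneg_of_hasDerivAt (hκ : 0 ≤ κ) (hw : ∀ r, HasDerivAt w (p r) r)
    (hz : ∀ r, HasDerivAt z (κ * w r) r) (hpz : ∀ r, 0 ≤ p r * z r) (hz0 : z 0 = 0)
    {r : ℝ} (hr : 0 ≤ r) : 0 ≤ w r * z r := by
  have hderiv : ∀ r, HasDerivAt (fun r => w r * z r) (p r * z r + w r * (κ * w r)) r :=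
    fun r => (hw r).mul (hz r)
  have hmono : Monotone fun r => w r * z r :=
    monotone_of_deriv_nonneg (fun r => (hderiv r).differentiableAt) fun r => by
      rw [(hderiv r).deriv]
      nlinarith [hpz r, mul_nonneg hκ (sq_nonneg (w r))]
  simpa [hz0] using hmono hr

lemma monotoneOn_sq_of_hasDerivAt (hκ : 0 ≤ κ) (hw : ∀ r, HasDerivAt w (p r) r)
    (hz : ∀ r, HasDerivAt z (κ * w r) r) (hpz : ∀ r, 0 ≤ p r * z r)
    (hp : ∀ r, z r = 0 → p r = 0) (hz0 : z 0 = 0) :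
    MonotoneOn (fun r => w r ^ 2) (Ici 0) := by
  have hderiv : ∀ r, HasDerivAt (fun r => w r ^ 2) (2 * w r * p r) r := fun r => by
    simpa using (hw r).fun_pow 2
  refine monotoneOn_of_hasDerivWithinAt_nonneg (convex_Ici 0)
    (fun r _ => (hderiv r).continuousAt.continuousWithinAt)
    (fun r _ => (hderiv r).hasDerivWithinAt) fun r hr => ?_
  rw [interior_Ici] at hr
  obtain hzr | hzr := eq_or_ne (z r) 0
  · simp [hp r hzr]
  -- `(w p) z² = (w z) (p z)`
  have hwp : 0 ≤ w r * p r * z r ^ 2 := by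
    nlinarith [mul_nonneg_of_hasDerivAt hκ hw hz hpz hz0 hr.le, hpz r]
  nlinarith [nonneg_of_mul_nonneg_left hwp (by positivity)]

end SignArgument

lemma le_of_monotoneOn_sq {w : ℝ → ℝ} (hw : Continuous w)
    (hsq : MonotoneOn (fun r => w r ^ 2) (Ici 0)) (hw0 : 0 < w 0) {a : ℝ} (ha : 0 ≤ a) :
    w 0 ≤ w a := by
  have hsq_le : ∀ r ∈ Icc 0 a, w 0 ^ 2 ≤ w r ^ 2 := fun r hr => hsq self_mem_Ici hr.1 hr.1
  have hwa : 0 < w a := by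
    by_contra! hwa
    obtain ⟨r, hr, hwr⟩ := intermediate_value_Icc' ha hw.continuousOn ⟨hwa, hw0.le⟩
    have := hsq_le r hr
    rw [hwr] at this
    nlinarith
  exact (pow_le_pow_iff_left₀ hw0.le hwa.le two_ne_zero).1 (hsq_le a ⟨ha, le_rfl⟩)

lemma Continuous.bijective_of_sub_le_sub {φ : ℝ → ℝ} (hφ : Continuous φ)
    (h : ∀ x y, x < y → y - x ≤ φ y - φ x) : Function.Bijective φ := by
  refine ⟨StrictMono.injective fun x y hxy => by linarith [h x y hxy], hφ.surjective ?_ ?_⟩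
  · refine tendsto_atTop_mono' atTop ?_ (tendsto_atTop_add_const_left atTop (φ 0) tendsto_id)
    filter_upwards [eventually_gt_atTop 0] with x hx
    show φ 0 + x ≤ φ x
    linarith [h 0 x hx]
  · refine tendsto_atBot_mono' atBot ?_ (tendsto_atBot_add_const_left atBot (φ 0) tendsto_id)
    filter_upwards [eventually_lt_atBot 0] with x hx
    show φ x ≤ φ 0 + x
    linarith [h x 0 hx]

structure IsSolution (g : ℝ → ℝ) (κ : ℝ) (u v : ℝ → ℝ) : Prop where
  hasDerivAt_fst : ∀ r, HasDerivAt u (g (v r)) r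
  hasDerivAt_snd : ∀ r, HasDerivAt v (κ * u r) r

namespace IsSolution

variable {g : ℝ → ℝ} {κ : ℝ} {u₀ v₀ u₁ v₁ : ℝ → ℝ}

lemma hasDerivAt_prod (h : IsSolution g κ u₀ v₀) (r : ℝ) :
    HasDerivAt (fun r => (u₀ r, v₀ r)) (g (v₀ r), κ * u₀ r) r :=
  (h.hasDerivAt_fst r).prodMk (h.hasDerivAt_snd r)

lemma continuous (h : IsSolution g κ u₀ v₀) : Continuous fun r => (u₀ r, v₀ r) :=
  continuous_iff_continuousAt.2 fun r => (h.hasDerivAt_prod r).continuousAt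

lemma dist_le {L : NNReal} (hg : LipschitzWith L g) (h₀ : IsSolution g κ u₀ v₀)
    (h₁ : IsSolution g κ u₁ v₁) {a : ℝ} (ha : 0 ≤ a) :
    dist (u₁ a, v₁ a) (u₀ a, v₀ a) ≤
      dist (u₁ 0, v₁ 0) (u₀ 0, v₀ 0) * Real.exp (max L ‖κ‖₊ * a) := by
  have hF : LipschitzWith (max L ‖κ‖₊) fun x : ℝ × ℝ => (g x.2, κ * x.1) := by
    have := (hg.comp LipschitzWith.prod_snd).prodMk
      ((lipschitzWith_smul (β := ℝ) κ).comp LipschitzWith.prod_fst)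
    rwa [mul_one, mul_one] at this
  simpa using dist_le_of_trajectories_ODE (fun _ => hF) h₁.continuous.continuousOn
    (fun r _ => (h₁.hasDerivAt_prod r).hasDerivWithinAt) h₀.continuous.continuousOn
    (fun r _ => (h₀.hasDerivAt_prod r).hasDerivWithinAt) le_rfl a ⟨ha, le_rfl⟩

lemma sub_le_sub (hg : Monotone g) (hκ : 0 ≤ κ) (h₀ : IsSolution g κ u₀ v₀)
    (h₁ : IsSolution g κ u₁ v₁) (hv : v₀ 0 = v₁ 0) (hu : u₀ 0 < u₁ 0) {a : ℝ} (ha : 0 ≤ a) :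
    u₁ 0 - u₀ 0 ≤ u₁ a - u₀ a := by
  have hw : ∀ r, HasDerivAt (fun r => u₁ r - u₀ r) (g (v₁ r) - g (v₀ r)) r := fun r =>
    (h₁.hasDerivAt_fst r).sub (h₀.hasDerivAt_fst r)
  have hz : ∀ r, HasDerivAt (fun r => v₁ r - v₀ r) (κ * (u₁ r - u₀ r)) r := fun r =>
    ((h₁.hasDerivAt_snd r).sub (h₀.hasDerivAt_snd r)).congr_deriv (mul_sub _ _ _).symm
  have hpz : ∀ r, 0 ≤ (g (v₁ r) - g (v₀ r)) * (v₁ r - v₀ r) := fun r => by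
    rcases le_total (v₀ r) (v₁ r) with h | h
    · exact mul_nonneg (sub_nonneg.2 (hg h)) (sub_nonneg.2 h)
    · exact mul_nonneg_of_nonpos_of_nonpos (sub_nonpos.2 (hg h)) (sub_nonpos.2 h)
  have hp : ∀ r, v₁ r - v₀ r = 0 → g (v₁ r) - g (v₀ r) = 0 := fun r h => by
    rw [sub_eq_zero.1 h, sub_self]
  exact le_of_monotoneOn_sq (continuous_iff_continuousAt.2 fun r => (hw r).continuousAt)
    (monotoneOn_sq_of_hasDerivAt hκ hw hz hpz hp (by simp [hv])) (sub_pos.2 hu) ha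

end IsSolution

/-- The family of sessile solutions foliates the plane. -/
theorem stmt_12 (κ a : ℝ) (hκ : 0 < κ) (ha : 0 < a)
    (U V : ℝ → ℝ → ℝ)
    (hU : ∀ u₀ : ℝ, ∀ r : ℝ,
      HasDerivAt (U u₀) (V u₀ r / Real.sqrt (1 + V u₀ r ^ 2)) r)
    (hV : ∀ u₀ : ℝ, ∀ r : ℝ, HasDerivAt (V u₀) (κ * U u₀ r) r)
    (hU0 : ∀ u₀ : ℝ, U u₀ 0 = u₀) (hV0 : ∀ u₀ : ℝ, V u₀ 0 = 0) :
    ∀ b : ℝ, ∃! u₀ : ℝ, U u₀ a = b := by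
  have hsol (x : ℝ) : IsSolution algSigmoid κ (U x) (V x) := ⟨hU x, hV x⟩
  have hexpand (x y : ℝ) (hxy : x < y) : y - x ≤ U y a - U x a := by
    simpa [hU0] using (hsol x).sub_le_sub monotone_algSigmoid hκ.le (hsol y)
      (by rw [hV0, hV0]) (by rwa [hU0, hU0]) ha.le
  have hcont : Continuous fun x => U x a := by
    refine (LipschitzWith.of_dist_le' (K := Real.exp (max 1 ‖κ‖₊ * a)) fun x y => ?_).continuous
    calc dist (U x a) (U y a) ≤ dist (U x a, V x a) (U y a, V y a) := le_max_left _ _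
      _ ≤ dist x y * Real.exp (max 1 ‖κ‖₊ * a) := by
        simpa [hU0, hV0] using (hsol y).dist_le lipschitzWith_one_algSigmoid (hsol x) ha.le
      _ = Real.exp (max 1 ‖κ‖₊ * a) * dist x y := mul_comm _ _
  exact fun b => (hcont.bijective_of_sub_le_sub hexpand).existsUnique b
end

section
/- Let a > 0, κ > 0, β > 0. Then there exists u₀ > 0 such that the solution u(·; u₀) of u' = v/√(1+v²), v' = κu with u(0) = u₀, v(0) = 0 satisfies u'(a; u₀) = tanh β. -/
/-!
The map `u₀ ↦ u'(a; u₀)` is continuous (Grönwall, the vector field being globally Lipschitz)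
and vanishes at `u₀ = 0`, where the solution is identically zero. For `u₀ > 0` the energy
`√(1 + v²) - κ u² / 2` is conserved, so `u² ≥ u₀²`; hence `u ≥ u₀`, `v(a) ≥ κ u₀ a`, and
`u'(a; u₀)` exceeds `tanh β` once `κ u₀ a > sinh β`. The intermediate value theorem concludes.
-/

open Set Real
open scoped NNReal

noncomputable def tanhArsinh (x : ℝ) : ℝ := x / √(1 + x ^ 2)

lemma one_le_sqrt_one_add_sq (x : ℝ) : 1 ≤ √(1 + x ^ 2) :=
  Real.one_le_sqrt.2 (by nlinarith)

lemma tanhArsinh_sinh (β : ℝ) : tanhArsinh (sinh β) = tanh β := by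
  rw [tanhArsinh, ← tanh_arsinh, arsinh_sinh]

lemma hasDerivAt_tanhArsinh (x : ℝ) : HasDerivAt tanhArsinh (1 / √(1 + x ^ 2) ^ 3) x := by
  have hsq : HasDerivAt (fun y : ℝ => 1 + y ^ 2) (2 * x) x := by
    simpa using (hasDerivAt_pow 2 x).const_add 1
  refine ((hasDerivAt_id' x).div (hsq.sqrt (by positivity)) (by positivity)).congr_deriv ?_
  field_simp
  rw [Real.sq_sqrt (by positivity)]
  ring

lemma strictMono_tanhArsinh : StrictMono tanhArsinh :=
  strictMono_of_deriv_pos fun x => by rw [(hasDerivAt_tanhArsinh x).deriv]; positivity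

lemma lipschitzWith_tanhArsinh : LipschitzWith 1 tanhArsinh := by
  refine lipschitzWith_of_nnnorm_deriv_le (fun x => (hasDerivAt_tanhArsinh x).differentiableAt)
    fun x => ?_
  rw [← NNReal.coe_le_coe, coe_nnnorm, (hasDerivAt_tanhArsinh x).deriv, Real.norm_eq_abs,
    abs_of_pos (by positivity), NNReal.coe_one, div_le_one (by positivity)]
  exact one_le_pow₀ (one_le_sqrt_one_add_sq x)

section Gronwall

variable {E : Type*} [NormedAddCommGroup E] [NormedSpace ℝ E] {v : ℝ → E → E} {K : ℝ≥0}

lemma dist_le_dist_mul_exp_of_hasDerivAt (hv : ∀ t, LipschitzWith K (v t)) {f g : ℝ → E}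
    (hf : ∀ t, HasDerivAt f (v t (f t)) t) (hg : ∀ t, HasDerivAt g (v t (g t)) t)
    {a : ℝ} (ha : 0 ≤ a) : dist (f a) (g a) ≤ dist (f 0) (g 0) * exp (K * a) := by
  have hfc : Continuous f := continuous_iff_continuousAt.2 fun t => (hf t).continuousAt
  have hgc : Continuous g := continuous_iff_continuousAt.2 fun t => (hg t).continuousAt
  simpa using dist_le_of_trajectories_ODE hv hfc.continuousOn
    (fun t _ => (hf t).hasDerivWithinAt) hgc.continuousOn (fun t _ => (hg t).hasDerivWithinAt)
    le_rfl a ⟨ha, le_rfl⟩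

lemma continuous_eval_of_hasDerivAt {X : Type*} [TopologicalSpace X]
    (hv : ∀ t, LipschitzWith K (v t)) {γ : X → ℝ → E}
    (hγ : ∀ x t, HasDerivAt (γ x) (v t (γ x t)) t) (hγ₀ : Continuous fun x => γ x 0)
    {a : ℝ} (ha : 0 ≤ a) : Continuous fun x => γ x a := by
  refine continuous_iff_continuousAt.2 fun x => tendsto_iff_dist_tendsto_zero.2 ?_
  have hinit : Filter.Tendsto (fun y => dist (γ y 0) (γ x 0) * exp (K * a)) (nhds x) (nhds 0) := by
    simpa using ((tendsto_iff_dist_tendsto_zero.1 hγ₀.continuousAt).mul_const (exp (K * a)))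
  exact squeeze_zero (fun _ => dist_nonneg)
    (fun y => dist_le_dist_mul_exp_of_hasDerivAt hv (hγ y) (hγ x) ha) hinit

end Gronwall

noncomputable def capillaryField (κ : ℝ) (p : ℝ × ℝ) : ℝ × ℝ := (tanhArsinh p.2, κ * p.1)

lemma lipschitzWith_capillaryField (κ : ℝ) : LipschitzWith (max 1 ‖κ‖₊) (capillaryField κ) := by
  have h : LipschitzWith (max (1 * 1) (‖κ‖₊ * 1)) (capillaryField κ) :=
    (lipschitzWith_tanhArsinh.comp LipschitzWith.prod_snd).prodMk
      ((lipschitzWith_smul κ).comp LipschitzWith.prod_fst)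
  rwa [mul_one, mul_one] at h

section CapillarySolution

variable {κ : ℝ} {u v : ℝ → ℝ}

lemma capillary_energy_eq (hu : ∀ r, HasDerivAt u (tanhArsinh (v r)) r)
    (hv : ∀ r, HasDerivAt v (κ * u r) r) (r : ℝ) :
    √(1 + v r ^ 2) - κ * u r ^ 2 / 2 = √(1 + v 0 ^ 2) - κ * u 0 ^ 2 / 2 := by
  have hE : ∀ x, HasDerivAt (fun r => √(1 + v r ^ 2) - κ * u r ^ 2 / 2) 0 x := by
    intro x
    refine ((((hv x).fun_pow 2).const_add 1).sqrt (by positivity)).sub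
      ((((hu x).fun_pow 2).const_mul κ).div_const 2) |>.congr_deriv ?_
    unfold tanhArsinh
    field_simp
    ring
  exact is_const_of_deriv_eq_zero (fun x => (hE x).differentiableAt) (fun x => (hE x).deriv) r 0

lemma capillary_initial_le (hκ : 0 < κ) (hu : ∀ r, HasDerivAt u (tanhArsinh (v r)) r)
    (hv : ∀ r, HasDerivAt v (κ * u r) r) (hu₀ : 0 < u 0) (hv₀ : v 0 = 0) (r : ℝ) :
    u 0 ≤ u r := by
  have hsq : ∀ s, u 0 ^ 2 ≤ u s ^ 2 := fun s => by
    have := capillary_energy_eq hu hv s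
    rw [hv₀] at this
    nlinarith [one_le_sqrt_one_add_sq (v s), Real.sqrt_one]
  have hpos : 0 < u r := by
    by_contra! hneg
    have hcont : Continuous u := continuous_iff_continuousAt.2 fun t => (hu t).continuousAt
    obtain ⟨s, hs⟩ := intermediate_value_univ r 0 hcont ⟨hneg, hu₀.le⟩
    nlinarith [hsq s]
  nlinarith [hsq r]

lemma capillary_mul_le (hκ : 0 < κ) (hu : ∀ r, HasDerivAt u (tanhArsinh (v r)) r)
    (hv : ∀ r, HasDerivAt v (κ * u r) r) (hu₀ : 0 < u 0) (hv₀ : v 0 = 0) {a : ℝ} (ha : 0 ≤ a) :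
    κ * u 0 * a ≤ v a := by
  have hv' : ∀ x, κ * u 0 ≤ deriv v x := fun x => by
    rw [(hv x).deriv]
    exact mul_le_mul_of_nonneg_left (capillary_initial_le hκ hu hv hu₀ hv₀ x) hκ.le
  simpa [hv₀] using
    mul_sub_le_image_sub_of_le_deriv (fun x => (hv x).differentiableAt) hv' ha

end CapillarySolution

/-- Existence for the capillary boundary problem: contact angle β at r = a. -/
theorem stmt_13 (κ a β : ℝ) (hκ : 0 < κ) (ha : 0 < a) (hβ : 0 < β)
    (U V : ℝ → ℝ → ℝ)
    (hU : ∀ u₀ : ℝ, ∀ r : ℝ,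
      HasDerivAt (U u₀) (V u₀ r / Real.sqrt (1 + V u₀ r ^ 2)) r)
    (hV : ∀ u₀ : ℝ, ∀ r : ℝ, HasDerivAt (V u₀) (κ * U u₀ r) r)
    (hU0 : ∀ u₀ : ℝ, U u₀ 0 = u₀) (hV0 : ∀ u₀ : ℝ, V u₀ 0 = 0) :
    ∃ u₀ : ℝ, 0 < u₀ ∧
      V u₀ a / Real.sqrt (1 + V u₀ a ^ 2) = Real.tanh β := by
  set γ : ℝ → ℝ → ℝ × ℝ := fun u₀ r => (U u₀ r, V u₀ r)
  have hγ : ∀ u₀ r, HasDerivAt (γ u₀) (capillaryField κ (γ u₀ r)) r :=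
    fun u₀ r => (hU u₀ r).prodMk (hV u₀ r)
  have hlip : ∀ _ : ℝ, LipschitzWith (max 1 ‖κ‖₊) (capillaryField κ) :=
    fun _ => lipschitzWith_capillaryField κ
  have hcont : Continuous fun u₀ => tanhArsinh (V u₀ a) := by
    have hγ₀ : Continuous fun u₀ => γ u₀ 0 := by
      simpa [γ, hU0, hV0] using continuous_id.prodMk continuous_const
    exact lipschitzWith_tanhArsinh.continuous.comp
      (continuous_snd.comp (continuous_eval_of_hasDerivAt hlip hγ hγ₀ ha.le))
  have hzero : V 0 a = 0 := by
    have hsteady : ∀ r, HasDerivAt (fun _ : ℝ => (0 : ℝ × ℝ)) (capillaryField κ 0) r := fun r => by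
      rw [show capillaryField κ 0 = 0 by ext <;> simp [capillaryField, tanhArsinh]]
      exact hasDerivAt_const r 0
    have := dist_le_dist_mul_exp_of_hasDerivAt hlip (hγ 0) hsteady ha.le
    simp only [γ, hU0, hV0, Prod.mk_zero_zero, dist_self, zero_mul, dist_le_zero] at this
    exact congrArg Prod.snd this
  set M := (sinh β + 1) / (κ * a)
  have hM : 0 < M := div_pos (by linarith [sinh_pos_iff.2 hβ]) (by positivity)
  have hVM : sinh β < V M a := by
    have := capillary_mul_le hκ (hU M) (hV M) (by rwa [hU0]) (hV0 M) ha.le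
    rw [hU0, show κ * M * a = sinh β + 1 by simp only [M]; field_simp] at this
    linarith
  obtain ⟨u₀, hu₀, hu₀a⟩ := intermediate_value_Ioo hM.le hcont.continuousOn
    (show tanh β ∈ Ioo (tanhArsinh (V 0 a)) (tanhArsinh (V M a)) by
      rw [← tanhArsinh_sinh, hzero]
      exact ⟨strictMono_tanhArsinh (sinh_pos_iff.2 hβ), strictMono_tanhArsinh hVM⟩)
  exact ⟨u₀, hu₀.1, hu₀a⟩
end

section
/- Let κ > 0, u₀ > 0, a > 0, β > 0, and let u solve u''/(1-u'²)^{3/2} = κu on [0,a] with u(0) = u₀, u'(0) = 0, u'(a) = tanh β. Then u₀ < sinh β/(a·κ). -/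
/-!
Along a solution, `E = 1/√(1 - u'²) - κu²/2` is conserved; since `u'(0) = 0`, this gives
`1/√(1 - u'²) - 1 = κ(u² - u₀²)/2`, so `u ≥ u₀` on `[0, a]`, strictly at `a` where
`u' = tanh β ≠ 0`. On the other hand `u'/√(1 - u'²)` (the `sinh` of the hyperbolic angle of the
graph) has derivative `κu`, so `κ ∫₀ᵃ u = sinh β`, and the strict comparison `∫₀ᵃ u > a u₀` is
the claim.
-/

open Real Set

lemma one_sub_sq_pos_of_abs_lt_one {t : ℝ} (ht : |t| < 1) : 0 < 1 - t ^ 2 := by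
  rwa [sub_pos, sq_lt_one_iff_abs_lt_one]

lemma HasDerivAt.inv_sqrt_one_sub_sq {f : ℝ → ℝ} {f' x : ℝ} (hf : HasDerivAt f f' x)
    (hx : |f x| < 1) :
    HasDerivAt (fun y => (√(1 - f y ^ 2))⁻¹) (f x * f' / √(1 - f x ^ 2) ^ 3) x := by
  have hpos := one_sub_sq_pos_of_abs_lt_one hx
  refine ((((hf.pow 2).const_sub 1).sqrt hpos.ne').inv (sqrt_pos.2 hpos).ne').congr_deriv ?_
  simp only [Pi.pow_apply, Nat.cast_ofNat, Nat.add_one_sub_one, pow_one]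
  field_simp

lemma HasDerivAt.div_sqrt_one_sub_sq {f : ℝ → ℝ} {f' x : ℝ} (hf : HasDerivAt f f' x)
    (hx : |f x| < 1) :
    HasDerivAt (fun y => f y / √(1 - f y ^ 2)) (f' / √(1 - f x ^ 2) ^ 3) x := by
  have hpos := one_sub_sq_pos_of_abs_lt_one hx
  refine (hf.mul (hf.inv_sqrt_one_sub_sq hx)).congr_deriv ?_
  field_simp
  rw [sq_sqrt hpos.le]
  ring

lemma one_le_inv_sqrt_one_sub_sq {t : ℝ} (ht : |t| < 1) : 1 ≤ (√(1 - t ^ 2))⁻¹ := by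
  refine (one_le_inv₀ (sqrt_pos.2 (one_sub_sq_pos_of_abs_lt_one ht))).2 (sqrt_le_one.2 ?_)
  nlinarith

lemma one_lt_inv_sqrt_one_sub_sq {t : ℝ} (ht : |t| < 1) (ht₀ : t ≠ 0) :
    1 < (√(1 - t ^ 2))⁻¹ := by
  refine (one_lt_inv₀ (sqrt_pos.2 (one_sub_sq_pos_of_abs_lt_one ht))).2 ((sqrt_lt' one_pos).2 ?_)
  nlinarith [sq_pos_of_ne_zero ht₀]

lemma tanh_div_sqrt_one_sub_tanh_sq (x : ℝ) : tanh x / √(1 - tanh x ^ 2) = sinh x := by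
  have hcosh : 1 - tanh x ^ 2 = (cosh x)⁻¹ ^ 2 := by
    rw [tanh_eq_sinh_div_cosh]
    field_simp
    linarith [cosh_sq x]
  rw [hcosh, sqrt_sq (inv_nonneg.2 (cosh_pos x).le), tanh_eq_sinh_div_cosh]
  field_simp

lemma le_of_le_abs_of_continuousOn {f : ℝ → ℝ} {a b c : ℝ} (hf : ContinuousOn f (Icc a b))
    (hfa : 0 < f a) (hc : 0 < c) (habs : ∀ x ∈ Icc a b, c ≤ |f x|) :
    ∀ x ∈ Icc a b, c ≤ f x := by
  intro x hx
  by_contra! hlt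
  have hneg : f x < 0 := by
    rcases abs_cases (f x) with ⟨h, -⟩ | ⟨h, -⟩ <;> linarith [habs x hx]
  obtain ⟨s, hs, hfs⟩ := intermediate_value_Icc' hx.1
    (hf.mono (Icc_subset_Icc_right hx.2)) ⟨hneg.le, hfa.le⟩
  have := habs s (Icc_subset_Icc_right hx.2 hs)
  rw [hfs, abs_zero] at this
  linarith

/-- `u'' / (1 - u'²)^{3/2} = κ u` on `[0, a]`, with `u'`, `u''` passed as functions. -/
structure IsSpacelikeCurvatureSolution (κ a : ℝ) (u u' u'' : ℝ → ℝ) : Prop where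
  hasDerivAt : ∀ r ∈ Icc 0 a, HasDerivAt u (u' r) r
  hasDerivAt_deriv : ∀ r ∈ Icc 0 a, HasDerivAt u' (u'' r) r
  abs_deriv_lt_one : ∀ r ∈ Icc 0 a, |u' r| < 1
  ode : ∀ r ∈ Icc 0 a, u'' r = κ * u r * √(1 - u' r ^ 2) ^ 3

namespace IsSpacelikeCurvatureSolution

variable {κ a : ℝ} {u u' u'' : ℝ → ℝ}

lemma continuousOn (hsol : IsSpacelikeCurvatureSolution κ a u u' u'') :
    ContinuousOn u (Icc 0 a) :=
  fun r hr => (hsol.hasDerivAt r hr).continuousAt.continuousWithinAt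

lemma hasDerivAt_energy (hsol : IsSpacelikeCurvatureSolution κ a u u' u'') {r : ℝ}
    (hr : r ∈ Icc 0 a) :
    HasDerivAt (fun x => (√(1 - u' x ^ 2))⁻¹ - κ * u x ^ 2 / 2) 0 r := by
  have hsqrt := sqrt_pos.2 (one_sub_sq_pos_of_abs_lt_one (hsol.abs_deriv_lt_one r hr))
  refine (((hsol.hasDerivAt_deriv r hr).inv_sqrt_one_sub_sq (hsol.abs_deriv_lt_one r hr)).sub
    ((((hsol.hasDerivAt r hr).pow 2).const_mul κ).div_const 2)).congr_deriv ?_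
  rw [hsol.ode r hr]
  field_simp
  ring

lemma energy_eq (hsol : IsSpacelikeCurvatureSolution κ a u u' u'') :
    ∀ r ∈ Icc 0 a, (√(1 - u' r ^ 2))⁻¹ - κ * u r ^ 2 / 2
      = (√(1 - u' 0 ^ 2))⁻¹ - κ * u 0 ^ 2 / 2 :=
  constant_of_has_deriv_right_zero
    (fun _ hr => (hsol.hasDerivAt_energy hr).continuousAt.continuousWithinAt)
    (fun _ hr => (hsol.hasDerivAt_energy (Ico_subset_Icc_self hr)).hasDerivWithinAt)

lemma inv_sqrt_sub_one_eq (hsol : IsSpacelikeCurvatureSolution κ a u u' u'')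
    (hu'0 : u' 0 = 0) {r : ℝ} (hr : r ∈ Icc 0 a) :
    (√(1 - u' r ^ 2))⁻¹ - 1 = κ / 2 * (u r ^ 2 - u 0 ^ 2) := by
  have hE := hsol.energy_eq r hr
  rw [hu'0, zero_pow two_ne_zero, sub_zero, sqrt_one, inv_one] at hE
  linarith

lemma apply_zero_le (hsol : IsSpacelikeCurvatureSolution κ a u u' u'') (hκ : 0 < κ)
    (hu0 : 0 < u 0) (hu'0 : u' 0 = 0) : ∀ r ∈ Icc 0 a, u 0 ≤ u r := by
  refine le_of_le_abs_of_continuousOn hsol.continuousOn hu0 hu0 fun r hr => ?_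
  have hE := hsol.inv_sqrt_sub_one_eq hu'0 hr
  have h1 := one_le_inv_sqrt_one_sub_sq (hsol.abs_deriv_lt_one r hr)
  rw [← abs_of_pos hu0, ← sq_le_sq]
  nlinarith

lemma apply_zero_lt (hsol : IsSpacelikeCurvatureSolution κ a u u' u'') (hκ : 0 < κ)
    (hu0 : 0 < u 0) (hu'0 : u' 0 = 0) {r : ℝ} (hr : r ∈ Icc 0 a) (hu'r : u' r ≠ 0) :
    u 0 < u r := by
  have hE := hsol.inv_sqrt_sub_one_eq hu'0 hr
  have h1 := one_lt_inv_sqrt_one_sub_sq (hsol.abs_deriv_lt_one r hr) hu'r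
  have hle := hsol.apply_zero_le hκ hu0 hu'0 r hr
  have hsq : u 0 ^ 2 < u r ^ 2 := by nlinarith
  exact lt_of_pow_lt_pow_left₀ 2 (hu0.le.trans hle) hsq

/-- `u' / √(1 - u'²)` is the `sinh` of the hyperbolic angle `ψ` of the graph; `ψ' = κ u`. -/
lemma integral_eq (hsol : IsSpacelikeCurvatureSolution κ a u u' u'') (ha : 0 ≤ a) :
    ∫ r in 0..a, κ * u r = u' a / √(1 - u' a ^ 2) - u' 0 / √(1 - u' 0 ^ 2) := by
  refine intervalIntegral.integral_eq_sub_of_hasDerivAt (f := fun r => u' r / √(1 - u' r ^ 2))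
    (fun r hr => ?_)
    ((continuousOn_const.mul hsol.continuousOn).intervalIntegrable_of_Icc ha)
  rw [uIcc_of_le ha] at hr
  have hsqrt := sqrt_pos.2 (one_sub_sq_pos_of_abs_lt_one (hsol.abs_deriv_lt_one r hr))
  refine ((hsol.hasDerivAt_deriv r hr).div_sqrt_one_sub_sq
    (hsol.abs_deriv_lt_one r hr)).congr_deriv ?_
  rw [hsol.ode r hr]
  field_simp

end IsSpacelikeCurvatureSolution

/-- Upper bound on the lowest height: u₀ < sinh β / (aκ). -/
theorem stmt_16 (κ u₀ a β : ℝ) (hκ : 0 < κ) (hu₀ : 0 < u₀) (ha : 0 < a) (hβ : 0 < β)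
    (u u' u'' : ℝ → ℝ)
    (hu : ∀ r ∈ Set.Icc (0:ℝ) a, HasDerivAt u (u' r) r)
    (hu' : ∀ r ∈ Set.Icc (0:ℝ) a, HasDerivAt u' (u'' r) r)
    (hsp : ∀ r ∈ Set.Icc (0:ℝ) a, |u' r| < 1)
    (hode : ∀ r ∈ Set.Icc (0:ℝ) a,
      u'' r = κ * u r * Real.sqrt (1 - u' r ^ 2) ^ 3)
    (hu0 : u 0 = u₀) (hu'0 : u' 0 = 0) (hu'a : u' a = Real.tanh β) :
    u₀ < Real.sinh β / (a * κ) := by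
  have hsol : IsSpacelikeCurvatureSolution κ a u u' u'' := ⟨hu, hu', hsp, hode⟩
  subst hu0
  have hua : u 0 < u a := hsol.apply_zero_lt hκ hu₀ hu'0 (right_mem_Icc.2 ha.le)
    (by rw [hu'a, tanh_eq_sinh_div_cosh]
        exact (div_pos (sinh_pos_iff.2 hβ) (cosh_pos β)).ne')
  have hint : ∫ r in 0..a, κ * u r = sinh β := by
    rw [hsol.integral_eq ha.le, hu'a, hu'0, tanh_div_sqrt_one_sub_tanh_sq]
    simp
  have hlt : a * κ * u 0 < sinh β := calc
    a * κ * u 0 = ∫ _ in 0..a, κ * u 0 := by simp; ring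
    _ < ∫ r in 0..a, κ * u r :=
      intervalIntegral.integral_lt_integral_of_continuousOn_of_le_of_exists_lt ha
        continuousOn_const (continuousOn_const.mul hsol.continuousOn)
        (fun r hr => mul_le_mul_of_nonneg_left
          (hsol.apply_zero_le hκ hu₀ hu'0 r (Ioc_subset_Icc_self hr)) hκ.le)
        ⟨a, right_mem_Icc.2 ha.le, mul_lt_mul_of_pos_left hua hκ⟩
    _ = sinh β := hint
  rwa [lt_div_iff₀ (mul_pos ha hκ), mul_comm]
end

section
/- Let κ < 0, u₀ < 0, and let (u,v) solve u' = v/√(1+v²), v' = κu on ℝ with u(0) = u₀, v(0) = 0. Then u is periodic, u₀ ≤ u(r) ≤ -u₀ for all r, u attains the values ±u₀ exactly at its critical points, and the zeros of u coincide with the inflection points of u (points where u'' = 0). -/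
/-!
Along a solution the energy `κ u² - 2√(1 + v²)` is constant, which confines `u` to `[u₀, -u₀]`
and shows that `v` vanishes exactly where `u = ±u₀`; writing `v / √(1 + v²) = sin (arctan v)`
gives `u'' = cos (arctan v) / (1 + v²) · κ u`, which vanishes exactly where `u` does.

For periodicity, the system is invariant under `(u, v)(r) ↦ (u, -v)(2c - r)`, so by uniqueness
for this Lipschitz system `u` is symmetric about every zero of `v`. `v` has a zero `T > 0`:
otherwise `v` has constant sign on `(0, ∞)`. If `v < 0` there, `u` decreases from its minimum
`u₀`, so `u 1 = u₀` and `v 1 = 0`. If `v > 0`, `u` increases, and either `u` becomes positive,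
after which `v' = κ u` drives `v` below zero, or `u` stays nonpositive, in which case `v`
increases and `u' ≥ sin (arctan (v 1)) > 0` drives `u` above zero. Symmetry about `0` and
about `T` makes `u` `2T`-periodic.
-/

open Real Set Filter

lemma IsPreconnected.forall_pos_or_forall_neg {α : Type*} [TopologicalSpace α] {s : Set α}
    {f : α → ℝ} (hs : IsPreconnected s) (hf : ContinuousOn f s) (hf0 : ∀ x ∈ s, f x ≠ 0) :
    (∀ x ∈ s, 0 < f x) ∨ ∀ x ∈ s, f x < 0 := by
  by_contra! h
  obtain ⟨⟨a, ha, hfa⟩, ⟨b, hb, hfb⟩⟩ := h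
  obtain ⟨c, hc, hfc⟩ := hs.intermediate_value ha hb hf ⟨hfa, hfb⟩
  exact hf0 c hc hfc

lemma monotoneOn_Ici_of_hasDerivAt_nonneg {f f' : ℝ → ℝ} {a : ℝ}
    (hf : ∀ x, HasDerivAt f (f' x) x) (hf' : ∀ x, a < x → 0 ≤ f' x) : MonotoneOn f (Ici a) :=
  monotoneOn_of_hasDerivWithinAt_nonneg (convex_Ici a)
    (fun x _ => (hf x).continuousAt.continuousWithinAt)
    (fun x _ => (hf x).hasDerivWithinAt)
    (fun x hx => hf' x (by rwa [interior_Ici] at hx))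

lemma tendsto_atTop_of_pos_le_hasDerivAt {f f' : ℝ → ℝ} {m a : ℝ}
    (hf : ∀ x, HasDerivAt f (f' x) x) (hm : 0 < m) (hf' : ∀ x, a < x → m ≤ f' x) :
    Tendsto f atTop atTop := by
  have hmono : MonotoneOn (fun x => f x - m * x) (Ici a) :=
    monotoneOn_Ici_of_hasDerivAt_nonneg (fun x => (hf x).sub ((hasDerivAt_id x).const_mul m))
      (fun x hx => by simpa using hf' x hx)
  refine tendsto_atTop_mono' atTop ?_
    (tendsto_atTop_add_const_left atTop (f a - m * a) (tendsto_id.const_mul_atTop hm))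
  filter_upwards [eventually_ge_atTop a] with x hx
  have := hmono self_mem_Ici hx hx
  simp only [id] at this ⊢
  linarith

lemma lipschitzWith_arctan : LipschitzWith 1 arctan := by
  refine lipschitzWith_of_nnnorm_deriv_le differentiable_arctan fun x => ?_
  rw [Real.deriv_arctan, ← NNReal.coe_le_coe, coe_nnnorm, norm_eq_abs, NNReal.coe_one,
    abs_of_pos (by positivity)]
  exact div_le_one_of_le₀ (by nlinarith [sq_nonneg x]) (by positivity)

noncomputable def pendentField (κ : ℝ) (p : ℝ × ℝ) : ℝ × ℝ :=
  (p.2 / √(1 + p.2 ^ 2), κ * p.1)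

lemma lipschitzWith_pendentField (κ : ℝ) : LipschitzWith (max 1 ‖κ‖₊) (pendentField κ) := by
  have hslope : LipschitzWith 1 fun a : ℝ => a / √(1 + a ^ 2) := by
    simpa only [← sin_arctan, mul_one, Function.comp_def] using
      lipschitzWith_sin.comp lipschitzWith_arctan
  have hlin : LipschitzWith ‖κ‖₊ fun a : ℝ => κ * a := by
    simpa only [smul_eq_mul] using lipschitzWith_smul (β := ℝ) κ
  have h := (hslope.comp LipschitzWith.prod_snd).prodMk (hlin.comp LipschitzWith.prod_fst)
  rwa [mul_one, mul_one] at h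

section Pendent

variable {κ : ℝ} {u v : ℝ → ℝ}

lemma pendent_energy_eq (hu : ∀ r, HasDerivAt u (v r / √(1 + v r ^ 2)) r)
    (hv : ∀ r, HasDerivAt v (κ * u r) r) (r s : ℝ) :
    κ * u r ^ 2 - 2 * √(1 + v r ^ 2) = κ * u s ^ 2 - 2 * √(1 + v s ^ 2) := by
  have hE : ∀ r, HasDerivAt (fun r => κ * u r ^ 2 - 2 * √(1 + v r ^ 2)) 0 r := by
    intro r
    have hsqrt := (((hv r).fun_pow 2).const_add 1).sqrt (by positivity)
    refine (((hu r).pow 2).const_mul κ |>.sub (hsqrt.const_mul 2)).congr_deriv ?_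
    field_simp
    ring
  exact is_const_of_deriv_eq_zero (fun x => (hE x).differentiableAt) (fun x => (hE x).deriv) r s

lemma pendent_sq_le (hu : ∀ r, HasDerivAt u (v r / √(1 + v r ^ 2)) r)
    (hv : ∀ r, HasDerivAt v (κ * u r) r) (hκ : κ < 0) (hv0 : v 0 = 0) (r : ℝ) :
    u r ^ 2 ≤ u 0 ^ 2 := by
  have hE := pendent_energy_eq hu hv r 0
  have hsqrt : 1 ≤ √(1 + v r ^ 2) := one_le_sqrt.2 (by nlinarith [sq_nonneg (v r)])
  rw [hv0] at hE
  norm_num at hE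
  nlinarith

lemma pendent_eq_zero_iff_sq_eq (hu : ∀ r, HasDerivAt u (v r / √(1 + v r ^ 2)) r)
    (hv : ∀ r, HasDerivAt v (κ * u r) r) (hκ : κ ≠ 0) (hv0 : v 0 = 0) (r : ℝ) :
    v r = 0 ↔ u r ^ 2 = u 0 ^ 2 := by
  have hE := pendent_energy_eq hu hv r 0
  rw [hv0] at hE
  norm_num at hE
  calc v r = 0 ↔ √(1 + v r ^ 2) = 1 := by simp [sqrt_eq_one]
    _ ↔ κ * (u r ^ 2 - u 0 ^ 2) = 0 := by constructor <;> intro h <;> linarith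
    _ ↔ u r ^ 2 = u 0 ^ 2 := by simp [hκ, sub_eq_zero]

lemma pendent_exists_pos_eq_zero (hu : ∀ r, HasDerivAt u (v r / √(1 + v r ^ 2)) r)
    (hv : ∀ r, HasDerivAt v (κ * u r) r) (hκ : κ < 0) (hu0 : u 0 < 0) (hv0 : v 0 = 0) :
    ∃ T, 0 < T ∧ v T = 0 := by
  by_contra! hne
  have hvc : Continuous v := continuous_iff_continuousAt.2 fun r => (hv r).continuousAt
  rcases isPreconnected_Ioi.forall_pos_or_forall_neg hvc.continuousOn hne with hpos | hneg
  · have hu_mono : MonotoneOn u (Ici 0) :=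
      monotoneOn_Ici_of_hasDerivAt_nonneg hu fun x hx => (div_pos (hpos x hx) (by positivity)).le
    by_cases hsign : ∃ t, 0 ≤ t ∧ 0 < u t
    · obtain ⟨t, ht, hut⟩ := hsign
      have hlim : Tendsto (fun s => -v s) atTop atTop :=
        tendsto_atTop_of_pos_le_hasDerivAt (a := t) (fun s => (hv s).neg)
          (by nlinarith : 0 < -κ * u t)
          fun s hs => by nlinarith [hu_mono ht (ht.trans hs.le) hs.le]
      obtain ⟨s, hs, hs0⟩ := ((hlim.eventually_ge_atTop 0).and (eventually_gt_atTop 0)).exists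
      linarith [hpos s hs0]
    · push Not at hsign
      have hv_mono : MonotoneOn v (Ici 0) :=
        monotoneOn_Ici_of_hasDerivAt_nonneg hv fun x hx => by nlinarith [hsign x hx.le]
      have hlim : Tendsto u atTop atTop := by
        refine tendsto_atTop_of_pos_le_hasDerivAt (a := 1) hu
          (sin_arctan_pos.2 (hpos 1 (mem_Ioi.2 one_pos))) fun s hs => ?_
        simpa only [sin_arctan] using
          sin_arctan_strictMono.monotone
            (hv_mono (mem_Ici.2 zero_le_one) (mem_Ici.2 (zero_le_one.trans hs.le)) hs.le)
      obtain ⟨s, hs, hs0⟩ := ((hlim.eventually_gt_atTop 0).and (eventually_ge_atTop 0)).exists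
      linarith [hsign s hs0]
  · have hu1_le : u 1 ≤ u 0 := by
      have := monotoneOn_Ici_of_hasDerivAt_nonneg (fun x => (hu x).neg)
        (fun x hx => neg_nonneg.2 (div_neg_of_neg_of_pos (hneg x hx) (by positivity)).le)
        self_mem_Ici (mem_Ici.2 zero_le_one) zero_le_one
      simpa using this
    have hu1 : u 1 = u 0 := by nlinarith [pendent_sq_le hu hv hκ hv0 1]
    exact hne 1 one_pos ((pendent_eq_zero_iff_sq_eq hu hv hκ.ne hv0 1).2 (by rw [hu1]))

lemma pendent_symm (hu : ∀ r, HasDerivAt u (v r / √(1 + v r ^ 2)) r)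
    (hv : ∀ r, HasDerivAt v (κ * u r) r) {c : ℝ} (hc : v c = 0) (s : ℝ) :
    u (2 * c - s) = u s := by
  have hrefl : ∀ r, HasDerivAt (fun s => (u (2 * c - s), -v (2 * c - s)))
      (pendentField κ (u (2 * c - r), -v (2 * c - r))) r := by
    intro r
    have hinner : HasDerivAt (fun s : ℝ => 2 * c - s) (-1) r := (hasDerivAt_id r).const_sub _
    refine ((hu _).comp r hinner).prodMk ((hv _).comp r hinner).neg |>.congr_deriv ?_
    simp [pendentField, neg_div]
  have h := ODE_solution_unique_univ (v := fun _ => pendentField κ) (s := fun _ => univ)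
    (fun _ => (lipschitzWith_pendentField κ).lipschitzOnWith)
    (fun r => ⟨(hu r).prodMk (hv r), trivial⟩) (fun r => ⟨hrefl r, trivial⟩)
    (t₀ := c) (by simp [hc, two_mul])
  exact (congrArg Prod.fst (congrFun h s)).symm

lemma pendent_hasDerivAt_slope (hv : ∀ r, HasDerivAt v (κ * u r) r) (r : ℝ) :
    HasDerivAt (fun s => v s / √(1 + v s ^ 2))
      (cos (arctan (v r)) * (1 / (1 + v r ^ 2) * (κ * u r))) r := by
  simpa only [sin_arctan] using (hv r).arctan.sin

end Pendent

/-- Pendent case: periodicity, bounds, critical points and inflections. -/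
theorem stmt_17 (κ u₀ : ℝ) (hκ : κ < 0) (hu₀ : u₀ < 0) (u v w : ℝ → ℝ)
    (hu : ∀ r : ℝ, HasDerivAt u (v r / Real.sqrt (1 + v r ^ 2)) r)
    (hv : ∀ r : ℝ, HasDerivAt v (κ * u r) r)
    (hw : ∀ r : ℝ, HasDerivAt (fun s => v s / Real.sqrt (1 + v s ^ 2)) (w r) r)
    (hu0 : u 0 = u₀) (hv0 : v 0 = 0) :
    (∃ T : ℝ, 0 < T ∧ Function.Periodic u T) ∧
    (∀ r : ℝ, u₀ ≤ u r ∧ u r ≤ -u₀) ∧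
    (∀ r : ℝ, v r = 0 ↔ (u r = u₀ ∨ u r = -u₀)) ∧
    (∀ r : ℝ, u r = 0 ↔ w r = 0) := by
  subst hu0
  refine ⟨?_, fun r => ?_, fun r => ?_, fun r => ?_⟩
  · obtain ⟨T, hT, hvT⟩ := pendent_exists_pos_eq_zero hu hv hκ hu₀ hv0
    refine ⟨2 * T, by positivity, fun s => ?_⟩
    rw [← pendent_symm hu hv hvT, ← pendent_symm hu hv hv0 s]
    ring_nf
  · simpa using abs_le_of_sq_le_sq' (by rw [neg_sq]; exact pendent_sq_le hu hv hκ hv0 r)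
      (neg_nonneg.2 hu₀.le)
  · rw [pendent_eq_zero_iff_sq_eq hu hv hκ.ne hv0, sq_eq_sq_iff_eq_or_eq_neg]
  · rw [(hw r).unique (pendent_hasDerivAt_slope hv r)]
    simp [(cos_arctan_pos _).ne', hκ.ne, (by positivity : (1 : ℝ) + v r ^ 2 ≠ 0)]
end

section
/- Let κ < 0, u₀ < 0, and let (u,v) solve u' = v/√(1+v²), v' = κu with u(0) = u₀, v(0) = 0. Let r₀ > 0 be a zero of u. Then |u'(r₀)| = (-u₀/(2 - κu₀²))·√(κ²u₀² - 4κ); equivalently, the maximum of |u'| over ℝ equals this value and is attained exactly at the zeros of u. -/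
/-!
The quantity `√(1 + v²) - κ u² / 2` is a first integral of the system, so along the solution
`√(1 + v²) = C + κ u² / 2` with `C = 1 - κ u₀² / 2`. Since `|u'| = |v| / √(1 + v²) = √(s² - 1) / s`
for `s = √(1 + v²)`, and `s ↦ √(s² - 1) / s` is strictly increasing on `[1, ∞)`, the slope is
largest exactly where `s` is, i.e. where the nonpositive term `κ u² / 2` vanishes: at the zeros of `u`.
-/

open Real Set

theorem sqrt_one_add_sq_sub_mul_sq_eq {κ : ℝ} {u v : ℝ → ℝ}
    (hu : ∀ r, HasDerivAt u (v r / √(1 + v r ^ 2)) r) (hv : ∀ r, HasDerivAt v (κ * u r) r)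
    (r : ℝ) :
    √(1 + v r ^ 2) - κ * u r ^ 2 / 2 = √(1 + v 0 ^ 2) - κ * u 0 ^ 2 / 2 := by
  have hderiv : ∀ x, HasDerivAt (fun r => √(1 + v r ^ 2) - κ * u r ^ 2 / 2) 0 x := by
    intro x
    have hpos : 0 < 1 + v x ^ 2 := by positivity
    have hsqrt := (((hv x).pow 2).const_add 1).sqrt hpos.ne'
    simp only [Pi.pow_apply] at hsqrt
    refine (hsqrt.sub (((hu x).pow 2).const_mul κ |>.div_const 2)).congr_deriv ?_
    field_simp
    push_cast
    ring
  exact is_const_of_deriv_eq_zero (fun x => (hderiv x).differentiableAt)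
    (fun x => (hderiv x).deriv) r 0

theorem abs_div_sqrt_one_add_sq (x : ℝ) :
    |x / √(1 + x ^ 2)| = √(√(1 + x ^ 2) ^ 2 - 1) / √(1 + x ^ 2) := by
  rw [sq_sqrt (by positivity), add_sub_cancel_left, sqrt_sq_eq_abs, abs_div,
    abs_of_pos (sqrt_pos.mpr (by positivity))]

theorem strictMonoOn_sqrt_sq_sub_one_div : StrictMonoOn (fun s => √(s ^ 2 - 1) / s) (Ici 1) := by
  intro s (hs : 1 ≤ s) t (ht : 1 ≤ t) hst
  have hs0 : 0 < s := by linarith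
  rw [div_lt_div_iff₀ hs0 (by linarith)]
  have hsq : (√(s ^ 2 - 1) * t) ^ 2 < (√(t ^ 2 - 1) * s) ^ 2 := by
    rw [mul_pow, mul_pow, sq_sqrt (by nlinarith), sq_sqrt (by nlinarith)]
    nlinarith
  exact lt_of_pow_lt_pow_left₀ 2 (by positivity) hsq

theorem sqrt_sq_sub_one_div_one_sub_mul_sq_div_two {κ u₀ : ℝ} (hκ : κ ≤ 0) (hu₀ : u₀ ≤ 0) :
    √((1 - κ * u₀ ^ 2 / 2) ^ 2 - 1) / (1 - κ * u₀ ^ 2 / 2)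
      = (-u₀ / (2 - κ * u₀ ^ 2)) * √(κ ^ 2 * u₀ ^ 2 - 4 * κ) := by
  have hden : 0 < 2 - κ * u₀ ^ 2 := by nlinarith [sq_nonneg u₀]
  have hfactor : (1 - κ * u₀ ^ 2 / 2) ^ 2 - 1 = (-u₀ / 2) ^ 2 * (κ ^ 2 * u₀ ^ 2 - 4 * κ) := by
    ring
  rw [hfactor, sqrt_mul (sq_nonneg _), sqrt_sq (by linarith)]
  field_simp

/-- Pendent case: maximum slope occurs exactly at the zeros of u. -/
theorem stmt_18 (κ u₀ : ℝ) (hκ : κ < 0) (hu₀ : u₀ < 0) (u v : ℝ → ℝ)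
    (hu : ∀ r : ℝ, HasDerivAt u (v r / Real.sqrt (1 + v r ^ 2)) r)
    (hv : ∀ r : ℝ, HasDerivAt v (κ * u r) r)
    (hu0 : u 0 = u₀) (hv0 : v 0 = 0) :
    (∀ r₀ : ℝ, u r₀ = 0 →
      |v r₀ / Real.sqrt (1 + v r₀ ^ 2)| =
        (-u₀ / (2 - κ * u₀ ^ 2)) * Real.sqrt (κ ^ 2 * u₀ ^ 2 - 4 * κ)) ∧
    (∀ r : ℝ, |v r / Real.sqrt (1 + v r ^ 2)| ≤
        (-u₀ / (2 - κ * u₀ ^ 2)) * Real.sqrt (κ ^ 2 * u₀ ^ 2 - 4 * κ)) ∧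
    (∀ r : ℝ, |v r / Real.sqrt (1 + v r ^ 2)| =
        (-u₀ / (2 - κ * u₀ ^ 2)) * Real.sqrt (κ ^ 2 * u₀ ^ 2 - 4 * κ) ↔ u r = 0) := by
  set f : ℝ → ℝ := fun s => √(s ^ 2 - 1) / s
  set C := 1 - κ * u₀ ^ 2 / 2
  have hmax : f C = (-u₀ / (2 - κ * u₀ ^ 2)) * √(κ ^ 2 * u₀ ^ 2 - 4 * κ) :=
    sqrt_sq_sub_one_div_one_sub_mul_sq_div_two hκ.le hu₀.le
  have hC : C ∈ Ici (1 : ℝ) := by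
    show 1 ≤ 1 - κ * u₀ ^ 2 / 2
    nlinarith [sq_nonneg u₀]
  have hs : ∀ r, √(1 + v r ^ 2) = C + κ * u r ^ 2 / 2 := fun r => by
    have := sqrt_one_add_sq_sub_mul_sq_eq hu hv r
    rw [hu0, hv0] at this
    norm_num at this
    linarith [show C = 1 - κ * u₀ ^ 2 / 2 from rfl]
  have hs_mem : ∀ r, √(1 + v r ^ 2) ∈ Ici (1 : ℝ) := fun r =>
    one_le_sqrt.mpr (by nlinarith [sq_nonneg (v r)])
  have hs_le : ∀ r, √(1 + v r ^ 2) ≤ C ∧ (√(1 + v r ^ 2) = C ↔ u r = 0) := fun r => by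
    rw [hs r]
    exact ⟨by nlinarith [sq_nonneg (u r)], by simp [hκ.ne]⟩
  have hslope : ∀ r, |v r / √(1 + v r ^ 2)| = f √(1 + v r ^ 2) :=
    fun r => abs_div_sqrt_one_add_sq (v r)
  have hiff : ∀ r, |v r / √(1 + v r ^ 2)| = f C ↔ u r = 0 := fun r => by
    rw [hslope, strictMonoOn_sqrt_sq_sub_one_div.injOn.eq_iff (hs_mem r) hC, (hs_le r).2]
  refine ⟨fun r h => hmax ▸ (hiff r).mpr h, fun r => ?_, fun r => hmax ▸ hiff r⟩
  rw [← hmax, hslope]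
  exact strictMonoOn_sqrt_sq_sub_one_div.monotoneOn (hs_mem r) hC (hs_le r).1
end
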